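/- arXiv:2301.06063 — 8 statements merged into one kernel-verified Lean document; each statement's English description precedes it below -/
import Mathlib

section
/- Let G be a densely ordered Archimedean linearly ordered abelian group, let Y be an abelian group (written additively), let ε ∈ G with ε > 0, and let f : G → Y be a function satisfying f(x+y) = f(x) + f(y) for all x, y in the open interval (-ε, ε). Then there exists an additive function a : G → Y such that a(x) = f(x) for all x in the open interval (-2ε, 2ε). -/
/-- Extension theorem for restricted additive functional equations: if `f` is
additive on `(-ε, ε)`, then some additive `a : G → Y` agrees with `f` on `(-2ε, 2ε)`. -/
theorem additive_extension
    {G : Type*} [AddCommGroup G] [LinearOrder G] [IsOrderedAddMonoid G] [Archimedean G] [DenselyOrdered G]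
    {Y : Type*} [AddCommGroup Y]
    (ε : G) (hε : 0 < ε) (f : G → Y)
    (hf : ∀ x y : G, x ∈ Set.Ioo (-ε) ε → y ∈ Set.Ioo (-ε) ε → f (x + y) = f x + f y) :
    ∃ a : G → Y, (∀ x y : G, a (x + y) = a x + a y) ∧
      ∀ x ∈ Set.Ioo (-(2 • ε)) (2 • ε), a x = f x := by
  have hnε : -ε < 0 := neg_lt_zero.mpr hε
  obtain ⟨δ, hδ0, hδε⟩ := exists_between hε
  have hδmem : δ ∈ Set.Ioo (-ε) ε := ⟨hnε.trans hδ0, hδε⟩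
  have h0mem : (0 : G) ∈ Set.Ioo (-ε) ε := ⟨hnε, hε⟩
  have hf0 : f 0 = 0 := by
    have := hf 0 0 h0mem h0mem
    rw [add_zero] at this
    exact (left_eq_add.mp this)
  -- membership lemma for remainders in [0, δ)
  have hmemIco : ∀ r : G, 0 ≤ r → r < δ → r ∈ Set.Ioo (-ε) ε :=
    fun r h1 h2 => ⟨hnε.trans_le h1, h2.trans hδε⟩
  -- Lemma A: positive multiples
  have lemA : ∀ n : ℕ, ∀ x : G, x < ε → -ε < x - n • δ →
      f x = n • f δ + f (x - n • δ) := by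
    intro n
    induction n with
    | zero => intro x _ _; simp
    | succ n ih =>
      intro x hx h
      have hrw : x - (n + 1) • δ = (x - δ) - n • δ := by
        rw [succ_nsmul]; abel
      rw [hrw] at h
      have hnδ0 : (0 : G) ≤ n • δ := nsmul_nonneg hδ0.le n
      have hxδlt : x - δ < ε := (sub_lt_self x hδ0).trans hx
      have hxδgt : -ε < x - δ := h.trans_le (sub_le_self _ hnδ0)
      have hstep := hf (x - δ) δ ⟨hxδgt, hxδlt⟩ hδmem
      rw [sub_add_cancel] at hstep
      rw [hstep, ih (x - δ) hxδlt h, hrw, succ_nsmul]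
      abel
  -- Lemma B: negative multiples
  have lemB : ∀ n : ℕ, ∀ x : G, -ε < x → x + n • δ < ε →
      f (x + n • δ) = f x + n • f δ := by
    intro n
    induction n with
    | zero => intro x _ _; simp
    | succ n ih =>
      intro x hx h
      have hrw : x + (n + 1) • δ = (x + δ) + n • δ := by
        rw [succ_nsmul]; abel
      rw [hrw] at h ⊢
      have hnδ0 : (0 : G) ≤ n • δ := nsmul_nonneg hδ0.le n
      have hxδlt : x + δ < ε := (le_add_of_nonneg_right hnδ0).trans_lt h
      have hxδgt : -ε < x + δ := hx.trans (lt_add_of_pos_right x hδ0)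
      have hxlt : x < ε := (lt_add_of_pos_right x hδ0).trans hxδlt
      have hstep := hf x δ ⟨hx, hxlt⟩ hδmem
      rw [ih (x + δ) hxδgt h, hstep, succ_nsmul]
      abel
  -- Lemma C: integer multiples
  have lemC : ∀ k : ℤ, ∀ x : G, -ε < x → x < ε → -ε < x - k • δ → x - k • δ < ε →
      f x = k • f δ + f (x - k • δ) := by
    intro k x hx1 hx2 h1 h2
    obtain ⟨n, rfl | rfl⟩ := k.eq_nat_or_neg
    · rw [natCast_zsmul, natCast_zsmul]
      rw [natCast_zsmul] at h1
      exact lemA n x hx2 h1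
    · rw [neg_zsmul, neg_zsmul, natCast_zsmul, natCast_zsmul, sub_neg_eq_add]
      rw [neg_zsmul, natCast_zsmul, sub_neg_eq_add] at h2
      rw [lemB n x hx1 h2]
      abel
  -- the floor function with respect to δ
  choose m hm1 hm2 using fun x : G => (existsUnique_zsmul_near_of_pos' hδ0 x).exists
  have huniq : ∀ (x : G) (k : ℤ), 0 ≤ x - k • δ → x - k • δ < δ → k = m x := by
    intro x k h1 h2
    exact (existsUnique_zsmul_near_of_pos' hδ0 x).unique ⟨h1, h2⟩ ⟨hm1 x, hm2 x⟩
  set a : G → Y := fun x => m x • f δ + f (x - m x • δ) with ha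
  have hadd : ∀ x y : G, a (x + y) = a x + a y := by
    intro x y
    have hrmem : x - m x • δ ∈ Set.Ioo (-ε) ε := hmemIco _ (hm1 x) (hm2 x)
    have hsmem : y - m y • δ ∈ Set.Ioo (-ε) ε := hmemIco _ (hm1 y) (hm2 y)
    have hfrs := hf _ _ hrmem hsmem
    rcases lt_or_ge ((x - m x • δ) + (y - m y • δ)) δ with hcase | hcase
    · have hmxy : m x + m y = m (x + y) := by
        apply huniq
        · rw [add_zsmul, show x + y - (m x • δ + m y • δ) = (x - m x • δ) + (y - m y • δ) by abel]
          exact add_nonneg (hm1 x) (hm1 y)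
        · rw [add_zsmul, show x + y - (m x • δ + m y • δ) = (x - m x • δ) + (y - m y • δ) by abel]
          exact hcase
      simp only [ha]
      rw [← hmxy,
        show x + y - (m x + m y) • δ = (x - m x • δ) + (y - m y • δ) by
          rw [add_zsmul]; abel,
        hfrs, add_zsmul]
      abel
    · have hrsδ0 : 0 ≤ (x - m x • δ) + (y - m y • δ) - δ := sub_nonneg.mpr hcase
      have hrsδlt : (x - m x • δ) + (y - m y • δ) - δ < δ :=
        sub_lt_iff_lt_add'.mpr (add_lt_add (hm2 x) (hm2 y))
      have hmxy : m x + m y + 1 = m (x + y) := by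
        apply huniq
        · rw [add_zsmul, one_zsmul, add_zsmul,
            show x + y - (m x • δ + m y • δ + δ) = (x - m x • δ) + (y - m y • δ) - δ by abel]
          exact hrsδ0
        · rw [add_zsmul, one_zsmul, add_zsmul,
            show x + y - (m x • δ + m y • δ + δ) = (x - m x • δ) + (y - m y • δ) - δ by abel]
          exact hrsδlt
      have hsplit := hf _ δ (hmemIco _ hrsδ0 hrsδlt) hδmem
      rw [sub_add_cancel] at hsplit
      simp only [ha]
      rw [← hmxy,
        show x + y - (m x + m y + 1) • δ = (x - m x • δ) + (y - m y • δ) - δ by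
          rw [add_zsmul, add_zsmul, one_zsmul]; abel]
      have hval : f ((x - m x • δ) + (y - m y • δ) - δ)
          = f (x - m x • δ) + f (y - m y • δ) - f δ := by
        rw [← hfrs]
        exact eq_sub_of_add_eq hsplit.symm
      rw [hval, add_zsmul, add_zsmul, one_zsmul]
      abel
  refine ⟨a, hadd, ?_⟩
  -- agreement on (-ε, ε)
  have hagree1 : ∀ x ∈ Set.Ioo (-ε) ε, a x = f x := by
    intro x hx
    have hrmem := hmemIco _ (hm1 x) (hm2 x)
    exact (lemC (m x) x hx.1 hx.2 hrmem.1 hrmem.2).symm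
  intro z hz
  rw [two_nsmul] at hz
  obtain ⟨hz1, hz2⟩ := hz
  have hz1' : -ε - ε < z := by rw [show -ε - ε = -(ε + ε) by abel]; exact hz1
  have hkey : max (-ε) (z - ε) < min ε (z + ε) := by
    rw [max_lt_iff, lt_min_iff, lt_min_iff]
    refine ⟨⟨hnε.trans hε, ?_⟩, ?_, ?_⟩
    · exact sub_lt_iff_lt_add.mp hz1'
    · exact sub_lt_iff_lt_add.mpr hz2
    · exact (sub_lt_self z hε).trans (lt_add_of_pos_right z hε)
  obtain ⟨t, ht1, ht2⟩ := exists_between hkey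
  have htmem : t ∈ Set.Ioo (-ε) ε :=
    ⟨(le_max_left _ _).trans_lt ht1, ht2.trans_le (min_le_left _ _)⟩
  have hztmem : z - t ∈ Set.Ioo (-ε) ε := by
    constructor
    · have : t < z + ε := ht2.trans_le (min_le_right _ _)
      exact neg_lt_sub_iff_lt_add.mpr (by rwa [add_comm] at this)
    · have : z - ε < t := (le_max_right _ _).trans_lt ht1
      exact sub_lt_comm.mp this
  have := hadd t (z - t)
  rw [add_sub_cancel] at this
  rw [this, hagree1 t htmem, hagree1 _ hztmem, ← hf t (z - t) htmem hztmem,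
    add_sub_cancel]
end

section
/- Let G be a densely ordered Archimedean linearly ordered abelian group, let Y be an abelian group (written additively), let ε ∈ G with ε > 0, and let f : G → Y be a function satisfying f(x+y) = f(x) + f(y) for all x, y in the open interval (-ε, ε). Then there exists a unique additive function a : G → Y such that a(x) = f(x) for all x in the open interval (-2ε, 2ε). -/
/-- Extension and uniqueness theorem for restricted additive functional equations:
if `f` is additive on `(-ε, ε)`, then there is a unique additive `a : G → Y`
agreeing with `f` on `(-2ε, 2ε)`. -/
theorem additive_extension_unique
    {G : Type*} [AddCommGroup G] [LinearOrder G] [IsOrderedAddMonoid G] [Archimedean G] [DenselyOrdered G]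
    {Y : Type*} [AddCommGroup Y]
    (ε : G) (hε : 0 < ε) (f : G → Y)
    (hf : ∀ x y : G, x ∈ Set.Ioo (-ε) ε → y ∈ Set.Ioo (-ε) ε → f (x + y) = f x + f y) :
    ∃! a : G → Y, (∀ x y : G, a (x + y) = a x + a y) ∧
      ∀ x ∈ Set.Ioo (-(2 • ε)) (2 • ε), a x = f x := by
  classical
  obtain ⟨v, hv0, hvε⟩ := exists_between hε
  obtain ⟨c, hc0, hcc⟩ : ∃ c : G, 0 < c ∧ c + c ≤ ε := by
    rcases le_or_gt (v + v) ε with h | h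
    · exact ⟨v, hv0, h⟩
    · refine ⟨ε - v, sub_pos.2 hvε, ?_⟩
      have h0 : 0 ≤ ε - (ε - v + (ε - v)) := by
        rw [show ε - (ε - v + (ε - v)) = (v + v) - ε by abel]
        exact sub_nonneg.2 h.le
      have := sub_nonneg.1 h0
      exact this
  have hcε : c < ε := lt_of_lt_of_le (lt_add_of_pos_left c hc0) hcc
  have hnegε : -ε < (0 : G) := neg_lt_zero.mpr hε
  have hcmem : c ∈ Set.Ioo (-ε) ε := ⟨hnegε.trans hc0, hcε⟩
  have hmem : ∀ r : G, 0 ≤ r → r < c → r ∈ Set.Ioo (-ε) ε :=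
    fun r h0 h1 => ⟨lt_of_lt_of_le hnegε h0, h1.trans hcε⟩
  have hdiv : ∀ x : G, ∃! k : ℤ, k • c ≤ x ∧ x < (k + 1) • c :=
    fun x => existsUnique_zsmul_near_of_pos hc0 x
  set K : G → ℤ := fun x => (hdiv x).exists.choose with hKdef
  have hK : ∀ x, K x • c ≤ x ∧ x < (K x + 1) • c := fun x => (hdiv x).exists.choose_spec
  have hKu : ∀ (x : G) (k : ℤ), k • c ≤ x → x < (k + 1) • c → K x = k :=
    fun x k h1 h2 => (hdiv x).unique (hK x) ⟨h1, h2⟩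
  have hr0 : ∀ x, 0 ≤ x - K x • c := fun x => sub_nonneg.2 (hK x).1
  have hrc : ∀ x, x - K x • c < c := by
    intro x
    have h := (hK x).2
    rw [add_zsmul, one_zsmul] at h
    exact sub_lt_iff_lt_add'.mpr h
  set a : G → Y := fun x => K x • f c + f (x - K x • c) with ha
  have hf0 : f 0 = 0 := by
    have h := hf 0 0 ⟨hnegε, hε⟩ ⟨hnegε, hε⟩
    rw [add_zero] at h
    exact (left_eq_add.mp h)
  -- additivity
  have hadd : ∀ x y : G, a (x + y) = a x + a y := by
    intro x y
    have hr0x := hr0 x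
    have hrcx := hrc x
    have hr0y := hr0 y
    have hrcy := hrc y
    have hfr : f ((x - K x • c) + (y - K y • c)) = f (x - K x • c) + f (y - K y • c) :=
      hf _ _ (hmem _ hr0x hrcx) (hmem _ hr0y hrcy)
    rcases lt_or_ge ((x - K x • c) + (y - K y • c)) c with hlt | hge
    · have hk : K (x + y) = K x + K y := by
        apply hKu
        · rw [add_zsmul]
          exact add_le_add (hK x).1 (hK y).1
        · rw [show (K x + K y + 1) • c = K x • c + K y • c + c by
            rw [add_zsmul, add_zsmul, one_zsmul]]
          have hlt' : x + y - (K x • c + K y • c) < c := by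
            rw [show x + y - (K x • c + K y • c) = (x - K x • c) + (y - K y • c) by abel]
            exact hlt
          exact sub_lt_iff_lt_add'.mp hlt'
      have harg : x + y - K (x + y) • c = (x - K x • c) + (y - K y • c) := by
        rw [hk, add_zsmul]; abel
      simp only [ha]
      rw [harg, hk, hfr, add_zsmul]
      abel
    · have hk : K (x + y) = K x + K y + 1 := by
        apply hKu
        · rw [show (K x + K y + 1) • c = K x • c + K y • c + c by
            rw [add_zsmul, add_zsmul, one_zsmul]]
          have hge' : c ≤ x + y - (K x • c + K y • c) := by
            rw [show x + y - (K x • c + K y • c) = (x - K x • c) + (y - K y • c) by abel]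
            exact hge
          exact le_sub_iff_add_le'.mp hge'
        · rw [show (K x + K y + 1 + 1) • c = K x • c + K y • c + (c + c) by
            rw [add_zsmul, add_zsmul, add_zsmul, one_zsmul]; abel]
          have h2 : x + y - (K x • c + K y • c) < c + c := by
            rw [show x + y - (K x • c + K y • c) = (x - K x • c) + (y - K y • c) by abel]
            exact add_lt_add hrcx hrcy
          exact sub_lt_iff_lt_add'.mp h2
      have harg : x + y - K (x + y) • c = (x - K x • c) + (y - K y • c) - c := by
        rw [hk, add_zsmul, add_zsmul, one_zsmul]; abel
      have hmR : (x - K x • c) + (y - K y • c) - c ∈ Set.Ioo (-ε) ε :=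
        hmem _ (sub_nonneg.2 hge) (sub_lt_iff_lt_add'.mpr (add_lt_add hrcx hrcy))
      have hsplit := hf c ((x - K x • c) + (y - K y • c) - c) hcmem hmR
      rw [show c + ((x - K x • c) + (y - K y • c) - c)
            = (x - K x • c) + (y - K y • c) by abel, hfr] at hsplit
      have hRc : f ((x - K x • c) + (y - K y • c) - c)
          = f (x - K x • c) + f (y - K y • c) - f c := by
        rw [hsplit]; abel
      simp only [ha]
      rw [harg, hk, hRc, add_zsmul, add_zsmul, one_zsmul]
      abel
  -- a agrees with f at c
  have hac : a c = f c := by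
    have hKc : K c = 1 := by
      apply hKu
      · rw [one_zsmul]
      · rw [add_zsmul, one_zsmul]
        exact lt_add_of_pos_right c hc0
    simp only [ha]
    rw [hKc, one_zsmul, one_zsmul, sub_self, hf0, add_zero]
  -- agreement on (-ε, ε)
  have hsmall : ∀ x ∈ Set.Ioo (-ε) ε, a x = f x := by
    have main : ∀ k : ℤ, ∀ x ∈ Set.Ioo (-ε) ε, K x = k → a x = f x := by
      intro k
      induction k using Int.induction_on with
      | zero =>
        intro x hx hKx
        simp only [ha]
        rw [hKx, zero_zsmul, zero_zsmul, sub_zero, zero_add]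
      | succ n ih =>
        intro x hx hKx
        have h1 := (hK x).1
        have h2 := (hK x).2
        rw [hKx] at h1 h2
        rw [show ((n : ℤ) + 1) • c = (n : ℤ) • c + c by rw [add_zsmul, one_zsmul]] at h1
        rw [show ((n : ℤ) + 1 + 1) • c = ((n : ℤ) • c + c) + c by
          rw [add_zsmul, add_zsmul, one_zsmul]] at h2
        have hn0 : (0 : G) ≤ (n : ℤ) • c := zsmul_nonneg hc0.le (by positivity)
        have hxc : (n : ℤ) • c ≤ x - c := le_sub_iff_add_le.mpr h1
        have hx' : x - c ∈ Set.Ioo (-ε) ε :=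
          ⟨lt_of_lt_of_le hnegε (hn0.trans hxc), (sub_lt_self x hc0).trans hx.2⟩
        have hK' : K (x - c) = (n : ℤ) := by
          apply hKu
          · exact hxc
          · rw [add_zsmul, one_zsmul]
            exact sub_lt_iff_lt_add.mpr h2
        have hstep : a x = a (x - c) + f c := by
          have h := hadd (x - c) c
          rw [show x - c + c = x by abel, hac] at h
          exact h
        rw [hstep, ih (x - c) hx' hK', ← hf (x - c) c hx' hcmem,
          show x - c + c = x by abel]
      | pred n ih =>
        intro x hx hKx
        have h1 := (hK x).1
        have h2 := (hK x).2
        rw [hKx] at h1 h2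
        rw [show (-(n : ℤ) - 1) • c = (-(n : ℤ)) • c - c by rw [sub_zsmul, one_zsmul]; abel] at h1
        rw [show (-(n : ℤ) - 1 + 1) • c = (-(n : ℤ)) • c by norm_num] at h2
        have hn0 : (-(n : ℤ)) • c ≤ 0 := by
          rw [neg_zsmul, neg_nonpos]
          exact zsmul_nonneg hc0.le (by positivity)
        have hx0 : x < 0 := lt_of_lt_of_le h2 hn0
        have hx' : x + c ∈ Set.Ioo (-ε) ε := by
          constructor
          · exact hx.1.trans (lt_add_of_pos_right x hc0)
          · have hxc2 : x + c < 0 + c := add_lt_add_left hx0 c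
            rw [zero_add] at hxc2
            exact hxc2.trans hcε
        have hK' : K (x + c) = -(n : ℤ) := by
          apply hKu
          · exact sub_le_iff_le_add.mp h1
          · rw [add_zsmul, one_zsmul]
            exact add_lt_add_left h2 c
        have hstep : a x = a (x + c) - f c := by
          have h := hadd x c
          rw [hac] at h
          rw [h]; abel
        rw [hstep, ih (x + c) hx' hK', hf x c hx hcmem]
        abel
    intro x hx
    exact main (K x) x hx rfl
  -- agreement on (-2ε, 2ε)
  have hagree : ∀ x ∈ Set.Ioo (-(2 • ε)) (2 • ε), a x = f x := by
    intro x hx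
    rw [two_nsmul] at hx
    obtain ⟨hx1, hx2⟩ := hx
    have hlt : max (x - ε) (-ε) < min (x + ε) ε := by
      apply max_lt
      · apply lt_min
        · exact (sub_lt_self x hε).trans (lt_add_of_pos_right x hε)
        · exact sub_lt_iff_lt_add.mpr hx2
      · apply lt_min
        · have h' : -ε - ε < x := by
            rw [show -ε - ε = -(ε + ε) by abel]; exact hx1
          exact sub_lt_iff_lt_add.mp h'
        · exact neg_lt_self hε
    obtain ⟨y, hy1, hy2⟩ := exists_between hlt
    have hy : y ∈ Set.Ioo (-ε) ε :=
      ⟨lt_of_le_of_lt (le_max_right _ _) hy1, lt_of_lt_of_le hy2 (min_le_right _ _)⟩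
    have h1 : y < x + ε := lt_of_lt_of_le hy2 (min_le_left _ _)
    have h2 : x - ε < y := lt_of_le_of_lt (le_max_left _ _) hy1
    have hz : x - y ∈ Set.Ioo (-ε) ε := by
      constructor
      · apply lt_sub_iff_add_lt.mpr
        rw [show -ε + y = y - ε by abel]
        exact sub_lt_iff_lt_add.mpr h1
      · apply sub_lt_iff_lt_add.mpr
        rw [add_comm]
        exact sub_lt_iff_lt_add.mp h2
    have hfx : f x = f y + f (x - y) := by
      have h := hf y (x - y) hy hz
      rw [show y + (x - y) = x by abel] at h
      exact h
    have hax : a x = a y + a (x - y) := by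
      have h := hadd y (x - y)
      rw [show y + (x - y) = x by abel] at h
      exact h
    rw [hax, hsmall y hy, hsmall (x - y) hz, hfx]
  refine ⟨a, ⟨hadd, hagree⟩, ?_⟩
  rintro b ⟨hbadd, hbagree⟩
  have hb : ∀ z ∈ Set.Ioo (-ε) ε, b z = f z := by
    intro z hz
    apply hbagree
    rw [two_nsmul]
    constructor
    · exact (neg_lt_neg (lt_add_of_pos_left ε hε)).trans hz.1
    · exact hz.2.trans (lt_add_of_pos_right ε hε)
  funext x
  let B : G →+ Y := AddMonoidHom.mk' b hbadd
  have hbz : b x = K x • b c + b (x - K x • c) := by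
    have hd : x = K x • c + (x - K x • c) := by abel
    calc b x = B x := rfl
      _ = B (K x • c + (x - K x • c)) := by rw [← hd]
      _ = K x • B c + B (x - K x • c) := by rw [map_add, map_zsmul]
      _ = K x • b c + b (x - K x • c) := rfl
  rw [hbz, hb c hcmem, hb _ (hmem _ (hr0 x) (hrc x))]
end

section
/- Let F be an Archimedean linearly ordered field, let Y be an abelian group (written additively), let ε ∈ F with ε > 1, and let f : F → Y be a function satisfying f(x·y) = f(x) + f(y) for all x, y in the open interval (ε⁻¹, ε). Then there exists a function l : F → Y with l(x·y) = l(x) + l(y) for all x, y > 0, such that l(x) = f(x) for all x in the open interval (ε⁻², ε²). -/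
/-- Extension theorem for restricted logarithmic functional equations: if `f` is
logarithmic on `(ε⁻¹, ε)`, then some logarithmic `l` agrees with `f` on `(ε⁻², ε²)`. -/
theorem logarithmic_extension
    {F : Type*} [Field F] [LinearOrder F] [IsStrictOrderedRing F] [Archimedean F]
    {Y : Type*} [AddCommGroup Y]
    (ε : F) (hε : 1 < ε) (f : F → Y)
    (hf : ∀ x y : F, x ∈ Set.Ioo ε⁻¹ ε → y ∈ Set.Ioo ε⁻¹ ε → f (x * y) = f x + f y) :
    ∃ l : F → Y, (∀ x y : F, 0 < x → 0 < y → l (x * y) = l x + l y) ∧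
      ∀ x ∈ Set.Ioo ((ε ^ 2)⁻¹) (ε ^ 2), l x = f x := by
  classical
  set η : F := (1 + ε) / 2 with hηdef
  have hη1 : 1 < η := by rw [hηdef]; linarith
  have hηε : η < ε := by rw [hηdef]; linarith
  have hη0 : 0 < η := lt_trans zero_lt_one hη1
  have hε0 : 0 < ε := lt_trans zero_lt_one hε
  have hεinv : ε⁻¹ < 1 := inv_lt_one_of_one_lt₀ hε
  have hηU : η ∈ Set.Ioo ε⁻¹ ε := ⟨lt_trans hεinv hη1, hηε⟩
  have hex : ∀ x : F, 0 < x → ∃ n : ℤ, η ^ n ≤ x ∧ x < η ^ (n + 1) := by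
    intro x hx
    obtain ⟨n, hn⟩ := exists_mem_Ico_zpow hx hη1
    exact ⟨n, hn.1, hn.2⟩
  choose! N hN1 hN2 using hex
  -- uniqueness of the exponent
  have hNuniq : ∀ x : F, 0 < x → ∀ n : ℤ, η ^ n ≤ x → x < η ^ (n + 1) → n = N x := by
    intro x hx n h1 h2
    by_contra hne
    rcases lt_or_gt_of_ne hne with h | h
    · have h' : (n + 1 : ℤ) ≤ N x := h
      have := zpow_le_zpow_right₀ hη1.le h'
      exact absurd (lt_of_lt_of_le h2 (le_trans this (hN1 x hx))) (lt_irrefl _)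
    · have h' : (N x + 1 : ℤ) ≤ n := h
      have := zpow_le_zpow_right₀ hη1.le h'
      exact absurd (lt_of_lt_of_le (hN2 x hx) (le_trans this h1)) (lt_irrefl _)
  set l : F → Y := fun x => if 0 < x then f (x / η ^ N x) + N x • f η else 0 with hldef
  have hlval : ∀ x : F, 0 < x → l x = f (x / η ^ N x) + N x • f η := by
    intro x hx; simp only [hldef, if_pos hx]
  -- the remainder lies in [1, η)
  have hrem1 : ∀ x : F, 0 < x → 1 ≤ x / η ^ N x := by
    intro x hx
    rw [le_div_iff₀ (zpow_pos hη0 _), one_mul]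
    exact hN1 x hx
  have hrem2 : ∀ x : F, 0 < x → x / η ^ N x < η := by
    intro x hx
    rw [div_lt_iff₀ (zpow_pos hη0 _)]
    have := hN2 x hx
    rwa [zpow_add_one₀ hη0.ne', mul_comm] at this
  have hremU : ∀ x : F, 0 < x → x / η ^ N x ∈ Set.Ioo ε⁻¹ ε :=
    fun x hx => ⟨lt_of_lt_of_le hεinv (hrem1 x hx), lt_trans (hrem2 x hx) hηε⟩
  -- additivity of l
  have hadd : ∀ x y : F, 0 < x → 0 < y → l (x * y) = l x + l y := by
    intro x y hx hy
    have hxy : 0 < x * y := mul_pos hx hy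
    set s := x / η ^ N x with hs
    set t := y / η ^ N y with ht
    have hs0 : 0 < s := lt_of_lt_of_le zero_lt_one (hrem1 x hx)
    have ht0 : 0 < t := lt_of_lt_of_le zero_lt_one (hrem1 y hy)
    have hst1 : 1 ≤ s * t := by nlinarith [hrem1 x hx, hrem1 y hy]
    have hstη2 : s * t < η * η := mul_lt_mul'' (hrem2 x hx) (hrem2 y hy) hs0.le ht0.le
    have hxyst : x * y = η ^ (N x + N y) * (s * t) := by
      rw [hs, ht, zpow_add₀ hη0.ne']
      field_simp
    have hsU : s ∈ Set.Ioo ε⁻¹ ε := hremU x hx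
    have htU : t ∈ Set.Ioo ε⁻¹ ε := hremU y hy
    rcases lt_or_ge (s * t) η with hcase | hcase
    · -- s * t < η : the exponent of x*y is N x + N y
      have hNxy : N x + N y = N (x * y) := by
        apply hNuniq (x * y) hxy
        · rw [hxyst]
          nth_rewrite 1 [← mul_one (η ^ (N x + N y))]
          exact mul_le_mul_of_nonneg_left hst1 (zpow_pos hη0 _).le
        · rw [hxyst, zpow_add_one₀ hη0.ne', mul_comm (η ^ (N x + N y)) η,
            mul_comm _ (s * t)]
          exact mul_lt_mul_of_pos_right hcase (zpow_pos hη0 _)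
      have hrw : x * y / η ^ N (x * y) = s * t := by
        rw [← hNxy, hxyst]
        exact mul_div_cancel_left₀ _ (zpow_pos hη0 _).ne'
      rw [hlval _ hxy, hlval _ hx, hlval _ hy, hrw, ← hNxy, hf s t hsU htU, add_smul]
      abel
    · -- η ≤ s * t : the exponent of x*y is N x + N y + 1
      have hq1 : 1 ≤ s * t / η := by
        rw [le_div_iff₀ hη0, one_mul]; exact hcase
      have hq2 : s * t / η < η := by
        rw [div_lt_iff₀ hη0]; exact hstη2
      have hqU : s * t / η ∈ Set.Ioo ε⁻¹ ε :=
        ⟨lt_of_lt_of_le hεinv hq1, lt_trans hq2 hηε⟩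
      have hNxy : N x + N y + 1 = N (x * y) := by
        apply hNuniq (x * y) hxy
        · rw [hxyst, zpow_add_one₀ hη0.ne']
          exact mul_le_mul_of_nonneg_left hcase (zpow_pos hη0 _).le
        · rw [hxyst]
          calc η ^ (N x + N y) * (s * t) < η ^ (N x + N y) * (η * η) :=
                mul_lt_mul_of_pos_left hstη2 (zpow_pos hη0 _)
          _ = η ^ (N x + N y + 1 + 1) := by
                rw [zpow_add_one₀ hη0.ne', zpow_add_one₀ hη0.ne']; ring
      have hrw : x * y / η ^ N (x * y) = s * t / η := by
        rw [← hNxy, hxyst, zpow_add_one₀ hη0.ne']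
        field_simp
      have hfq : f (s * t / η) + f η = f s + f t := by
        have h1 : f (s * t / η * η) = f (s * t / η) + f η := hf _ _ hqU hηU
        rw [div_mul_cancel₀ _ hη0.ne'] at h1
        rw [← h1]
        exact hf s t hsU htU
      rw [hlval _ hxy, hlval _ hx, hlval _ hy, hrw, ← hNxy]
      have : (N x + N y + 1) • f η = N x • f η + N y • f η + f η := by
        rw [add_smul, add_smul, one_smul]
      rw [this]
      have : f (s * t / η) + (N x • f η + N y • f η + f η)
          = (f (s * t / η) + f η) + N x • f η + N y • f η := by abel
      rw [this, hfq]
      abel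
  -- l agrees with f on (ε⁻¹, ε)
  have hR : ∀ k : ℕ, ∀ x : F, x ∈ Set.Ioo ε⁻¹ ε → η ^ (k : ℕ) ≤ x →
      f x = f (x / η ^ (k : ℕ)) + k • f η := by
    intro k
    induction k with
    | zero => intro x _ _; simp
    | succ k ih =>
      intro x hxU hk
      have hx0 : 0 < x := lt_of_lt_of_le (pow_pos hη0 _) hk
      have hxη : x / η ∈ Set.Ioo ε⁻¹ ε := by
        constructor
        · have : (1 : F) ≤ x / η := by
            rw [le_div_iff₀ hη0, one_mul]
            calc η = η ^ (1:ℕ) := (pow_one η).symm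
            _ ≤ η ^ (k+1 : ℕ) := pow_le_pow_right₀ hη1.le (Nat.one_le_iff_ne_zero.mpr (Nat.succ_ne_zero k))
            _ ≤ x := hk
          exact lt_of_lt_of_le hεinv this
        · rw [div_lt_iff₀ hη0]
          calc x < ε := hxU.2
          _ ≤ ε * η := le_mul_of_one_le_right hε0.le hη1.le
      have hkx : η ^ (k : ℕ) ≤ x / η := by
        rw [le_div_iff₀ hη0, ← pow_succ]
        exact hk
      have h1 : f (x / η * η) = f (x / η) + f η := hf _ _ hxη hηU
      rw [div_mul_cancel₀ _ hη0.ne'] at h1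
      have h2 := ih (x / η) hxη hkx
      rw [h1, h2, div_div, ← pow_succ']
      rw [succ_nsmul]
      abel
  have hT : ∀ k : ℕ, ∀ x : F, x ∈ Set.Ioo ε⁻¹ ε → x * η ^ (k : ℕ) < η →
      f (x * η ^ (k : ℕ)) = f x + k • f η := by
    intro k
    induction k with
    | zero => intro x _ _; simp
    | succ k ih =>
      intro x hxU hk
      have hx0 : 0 < x := lt_trans (inv_pos.mpr hε0) hxU.1
      have hxη : x * η ∈ Set.Ioo ε⁻¹ ε := by
        constructor
        · calc ε⁻¹ < x := hxU.1
          _ ≤ x * η := le_mul_of_one_le_right hx0.le hη1.le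
        · have : x * η * η ^ (k:ℕ) < η := by
            rw [mul_assoc, ← pow_succ']
            exact hk
          have hηk1 : (1:F) ≤ η ^ (k:ℕ) := one_le_pow₀ hη1.le
          calc x * η ≤ x * η * η ^ (k:ℕ) :=
                le_mul_of_one_le_right (mul_pos hx0 hη0).le hηk1
          _ < η := this
          _ < ε := hηε
      have h1 : f (x * η) = f x + f η := hf _ _ hxU hηU
      have hk' : x * η * η ^ (k:ℕ) < η := by
        rw [mul_assoc, ← pow_succ']
        exact hk
      have h2 := ih (x * η) hxη hk'
      rw [mul_assoc, ← pow_succ'] at h2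
      rw [h2, h1, succ_nsmul]
      abel
  have hlf : ∀ x : F, x ∈ Set.Ioo ε⁻¹ ε → l x = f x := by
    intro x hxU
    have hx0 : 0 < x := lt_trans (inv_pos.mpr hε0) hxU.1
    rw [hlval x hx0]
    cases hNx : N x with
    | ofNat k =>
      have hk : η ^ (k:ℕ) ≤ x := by
        have := hN1 x hx0
        rw [hNx] at this
        rwa [show ((Int.ofNat k : ℤ)) = (k:ℤ) from rfl, zpow_natCast] at this
      have h2 := hR k x hxU hk
      rw [show ((Int.ofNat k : ℤ)) = (k:ℤ) from rfl, zpow_natCast, natCast_zsmul]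
      exact h2.symm
    | negSucc k =>
      have hk : x * η ^ (k+1:ℕ) < η := by
        have := hN2 x hx0
        rw [hNx, show (Int.negSucc k + 1 : ℤ) = -(k:ℤ) from by rw [Int.negSucc_eq]; ring] at this
        rw [zpow_neg, zpow_natCast] at this
        have hpow : (0:F) < η ^ (k:ℕ) := pow_pos hη0 _
        calc x * η ^ (k+1:ℕ) = x * η ^ (k:ℕ) * η := by rw [pow_succ]; ring
        _ < (η ^ (k:ℕ))⁻¹ * η ^ (k:ℕ) * η := by
              apply mul_lt_mul_of_pos_right _ hη0
              exact mul_lt_mul_of_pos_right this hpow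
        _ = η := by rw [inv_mul_cancel₀ hpow.ne', one_mul]
      have h2 := hT (k+1) x hxU hk
      rw [zpow_negSucc, negSucc_zsmul]
      have hrw : x / (η ^ (k+1:ℕ))⁻¹ = x * η ^ (k+1:ℕ) := by
        field_simp
      rw [hrw, h2]
      abel
  refine ⟨l, hadd, ?_⟩
  intro x hx
  have hε2 : (0:F) < ε ^ 2 := pow_pos hε0 2
  have hx0 : 0 < x := lt_trans (inv_pos.mpr hε2) hx.1
  have hA : x / ε < x * ε :=
    lt_trans (div_lt_self hx0 hε) (lt_mul_of_one_lt_right hx0 hε)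
  have hB : x / ε < ε := by
    rw [div_lt_iff₀ hε0]
    have := hx.2
    rwa [pow_two] at this
  have hC : ε⁻¹ < x * ε := by
    have h1 : ε⁻¹ / ε < x := by
      rw [div_eq_mul_inv, ← mul_inv, ← sq]
      exact hx.1
    exact (div_lt_iff₀ hε0).mp h1
  have hmm : max (x / ε) ε⁻¹ < min (x * ε) ε :=
    max_lt (lt_min hA hB) (lt_min hC (lt_trans hεinv hε))
  obtain ⟨u, hul, hur⟩ := exists_between hmm
  have huU : u ∈ Set.Ioo ε⁻¹ ε :=
    ⟨lt_of_le_of_lt (le_max_right _ _) hul, lt_of_lt_of_le hur (min_le_right _ _)⟩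
  have hu0 : 0 < u := lt_trans (inv_pos.mpr hε0) huU.1
  have hv0 : 0 < x / u := div_pos hx0 hu0
  have hvU : x / u ∈ Set.Ioo ε⁻¹ ε := by
    constructor
    · rw [lt_div_iff₀ hu0]
      have h1 : u < x * ε := lt_of_lt_of_le hur (min_le_left _ _)
      calc ε⁻¹ * u < ε⁻¹ * (x * ε) := by
            exact mul_lt_mul_of_pos_left h1 (inv_pos.mpr hε0)
      _ = x * (ε⁻¹ * ε) := by ring
      _ = x := by rw [inv_mul_cancel₀ hε0.ne', mul_one]
    · rw [div_lt_iff₀ hu0]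
      have h1 : x / ε < u := lt_of_le_of_lt (le_max_left _ _) hul
      rw [div_lt_iff₀ hε0] at h1
      calc x < u * ε := h1
      _ = ε * u := mul_comm u ε
  have hxuv : u * (x / u) = x := by field_simp
  calc l x = l (u * (x / u)) := by rw [hxuv]
  _ = l u + l (x / u) := hadd u (x / u) hu0 hv0
  _ = f u + f (x / u) := by rw [hlf u huU, hlf _ hvU]
  _ = f (u * (x / u)) := (hf u (x / u) huU hvU).symm
  _ = f x := by rw [hxuv]
end

section
/- Let F be an Archimedean linearly ordered field, let Y be an abelian group (written additively), let ε ∈ F with ε > 1, and let f : F → Y be a function satisfying f(x·y) = f(x) + f(y) for all x, y in the open interval (ε⁻¹, ε). Then there exists a logarithmic function l on the positive elements of F, i.e., l(x·y) = l(x) + l(y) for all x, y > 0, such that l(x) = f(x) for all x in the open interval (ε⁻², ε²), and any two such logarithmic functions agree on all positive elements of F. -/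
section logAux

variable {F : Type*} [Field F] [LinearOrder F] [IsStrictOrderedRing F] [Archimedean F]
  {Y : Type*} [AddCommGroup Y]

/-- A logarithmic function sends `1` to `0`. -/
lemma log_one_aux {l : F → Y} (hl : ∀ x y : F, 0 < x → 0 < y → l (x * y) = l x + l y) :
    l 1 = 0 := by
  have := hl 1 1 one_pos one_pos
  rw [mul_one] at this
  exact (left_eq_add.mp this)

/-- A logarithmic function on integer powers. -/
lemma log_zpow_aux {l : F → Y} (hl : ∀ x y : F, 0 < x → 0 < y → l (x * y) = l x + l y)
    {δ : F} (hδ : 0 < δ) : ∀ n : ℤ, l (δ ^ n) = n • l δ := by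
  intro n
  induction n using Int.induction_on with
  | zero => simpa using log_one_aux hl
  | succ k ih =>
      have h : l (δ ^ (k : ℤ) * δ) = l (δ ^ (k : ℤ)) + l δ := hl _ _ (zpow_pos hδ _) hδ
      rw [← zpow_add_one₀ (ne_of_gt hδ)] at h
      rw [h, ih, add_smul, one_smul]
  | pred k ih =>
      have h : l (δ ^ (-(k : ℤ) - 1) * δ) = l (δ ^ (-(k : ℤ) - 1)) + l δ :=
        hl _ _ (zpow_pos hδ _) hδ
      rw [← zpow_add_one₀ (ne_of_gt hδ), sub_add_cancel] at h
      have h2 : l (δ ^ (-(k : ℤ) - 1)) = l (δ ^ (-(k : ℤ))) - l δ := by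
        rw [h]; abel
      rw [h2, ih, sub_smul, one_smul]

/-- Induction lemma: pulling powers of `δ` out of `f` within `[1, ε)`. -/
lemma log_pow_pull_aux {ε : F} (hε : 1 < ε) {f : F → Y}
    (hf : ∀ x y : F, x ∈ Set.Ioo ε⁻¹ ε → y ∈ Set.Ioo ε⁻¹ ε → f (x * y) = f x + f y)
    {δ : F} (hδ1 : 1 < δ) (hδε : δ < ε) :
    ∀ m : ℕ, ∀ x : F, δ ^ m ≤ x → x < ε → f x = f (x / δ ^ m) + m • f δ := by
  have hεinv : ε⁻¹ < 1 := inv_lt_one_of_one_lt₀ hε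
  have hδ0 : (0:F) < δ := lt_trans one_pos hδ1
  have hδmem : δ ∈ Set.Ioo ε⁻¹ ε := ⟨lt_trans hεinv hδ1, hδε⟩
  intro m
  induction m with
  | zero => intro x _ _; simp
  | succ k ih =>
      intro x hx1 hx2
      have hone : (1:F) ≤ δ ^ k := one_le_pow₀ (le_of_lt hδ1)
      have hxpos : (0:F) < x := lt_of_lt_of_le (pow_pos hδ0 (k+1)) hx1
      have hx1' : δ ^ k ≤ x / δ := by
        rw [le_div_iff₀ hδ0]
        calc δ ^ k * δ = δ ^ (k+1) := by ring
        _ ≤ x := hx1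
      have hxd1 : (1:F) ≤ x / δ := le_trans hone hx1'
      have hxd2 : x / δ < ε := by
        have h : x / δ < x := by
          rw [div_lt_iff₀ hδ0]
          exact lt_mul_of_one_lt_right hxpos hδ1
        exact lt_trans h hx2
      have hmem : x / δ ∈ Set.Ioo ε⁻¹ ε := ⟨lt_of_lt_of_le hεinv hxd1, hxd2⟩
      have hstep : f x = f δ + f (x / δ) := by
        have h := hf δ (x / δ) hδmem hmem
        rw [mul_div_cancel₀ x (ne_of_gt hδ0)] at h
        exact h
      have hih := ih (x / δ) hx1' hxd2
      have hdiv : x / δ / δ ^ k = x / δ ^ (k+1) := by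
        rw [div_div, pow_succ]; ring_nf
      rw [hstep, hih, hdiv, succ_nsmul]
      abel

end logAux

set_option maxHeartbeats 2000000 in
/-- Extension and uniqueness theorem for restricted logarithmic functional equations:
if `f` is logarithmic on `(ε⁻¹, ε)`, then there exists a logarithmic `l` agreeing with
`f` on `(ε⁻², ε²)`, and any two such logarithmic extensions agree on all positives. -/
theorem logarithmic_extension_unique
    {F : Type*} [Field F] [LinearOrder F] [IsStrictOrderedRing F] [Archimedean F]
    {Y : Type*} [AddCommGroup Y]
    (ε : F) (hε : 1 < ε) (f : F → Y)
    (hf : ∀ x y : F, x ∈ Set.Ioo ε⁻¹ ε → y ∈ Set.Ioo ε⁻¹ ε → f (x * y) = f x + f y) :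
    (∃ l : F → Y, (∀ x y : F, 0 < x → 0 < y → l (x * y) = l x + l y) ∧
      ∀ x ∈ Set.Ioo ((ε ^ 2)⁻¹) (ε ^ 2), l x = f x) ∧
    (∀ l₁ l₂ : F → Y,
      ((∀ x y : F, 0 < x → 0 < y → l₁ (x * y) = l₁ x + l₁ y) ∧
        ∀ x ∈ Set.Ioo ((ε ^ 2)⁻¹) (ε ^ 2), l₁ x = f x) →
      ((∀ x y : F, 0 < x → 0 < y → l₂ (x * y) = l₂ x + l₂ y) ∧
        ∀ x ∈ Set.Ioo ((ε ^ 2)⁻¹) (ε ^ 2), l₂ x = f x) →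
      ∀ x : F, 0 < x → l₁ x = l₂ x) := by
  classical
  have hε0 : (0:F) < ε := lt_trans one_pos hε
  have hεinv : ε⁻¹ < 1 := inv_lt_one_of_one_lt₀ hε
  have hε2 : (1:F) < ε ^ 2 := by nlinarith
  have hε20 : (0:F) < ε ^ 2 := by positivity
  -- the auxiliary base δ
  set δ : F := (1 + ε) / 2 with hδdef
  have hδ1 : 1 < δ := by rw [hδdef]; linarith
  have hδε : δ < ε := by rw [hδdef]; linarith
  have hδ0 : (0:F) < δ := lt_trans one_pos hδ1
  have hδmem : δ ∈ Set.Ioo ε⁻¹ ε := ⟨lt_trans hεinv hδ1, hδε⟩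
  have hsub : Set.Ico (1:F) δ ⊆ Set.Ioo ε⁻¹ ε := fun r hr =>
    ⟨lt_of_lt_of_le hεinv hr.1, lt_trans hr.2 hδε⟩
  -- choose exponents
  have key : ∀ x : F, 0 < x → ∃ n : ℤ, δ ^ n ≤ x ∧ x < δ ^ (n + 1) := by
    intro x hx
    obtain ⟨n, h1, h2⟩ := exists_mem_Ico_zpow hx hδ1
    exact ⟨n, h1, h2⟩
  choose! N hN1 hN2 using key
  -- the extension
  set l : F → Y := fun x => if h : 0 < x then f (x / δ ^ N x) + (N x) • f δ else 0 with hldef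
  have hlval : ∀ x : F, 0 < x → l x = f (x / δ ^ N x) + (N x) • f δ := by
    intro x hx; simp only [hldef]; exact dif_pos hx
  have hratio : ∀ x : F, 0 < x → x / δ ^ N x ∈ Set.Ico (1:F) δ := by
    intro x hx
    constructor
    · rw [one_le_div₀ (zpow_pos hδ0 _)]; exact hN1 x hx
    · rw [div_lt_iff₀ (zpow_pos hδ0 _)]
      calc x < δ ^ (N x + 1) := hN2 x hx
      _ = δ * δ ^ N x := by rw [zpow_add_one₀ (ne_of_gt hδ0)]; ring
  have hf1 : f 1 = 0 := by
    have h1 : (1:F) ∈ Set.Ioo ε⁻¹ ε := ⟨hεinv, hε⟩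
    have h := hf 1 1 h1 h1
    rw [mul_one] at h
    exact (left_eq_add.mp h)
  -- l is logarithmic
  have hl : ∀ x y : F, 0 < x → 0 < y → l (x * y) = l x + l y := by
    intro x y hx hy
    have hxy : 0 < x * y := mul_pos hx hy
    set n := N x with hn
    set m := N y with hm
    set k := N (x * y) with hk
    set r := x / δ ^ n with hr
    set s := y / δ ^ m with hs
    set t := (x * y) / δ ^ k with ht
    have hrI := hratio x hx
    have hsI := hratio y hy
    have htI := hratio (x * y) hxy
    have hxeq : x = r * δ ^ n := by
      rw [hr, div_mul_cancel₀ _ (ne_of_gt (zpow_pos hδ0 _))]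
    have hyeq : y = s * δ ^ m := by
      rw [hs, div_mul_cancel₀ _ (ne_of_gt (zpow_pos hδ0 _))]
    have hxyeq : x * y = t * δ ^ k := by
      rw [ht, div_mul_cancel₀ _ (ne_of_gt (zpow_pos hδ0 _))]
    have hrs : x * y = (r * s) * δ ^ (n + m) := by
      rw [zpow_add₀ (ne_of_gt hδ0)]
      calc x * y = (r * δ ^ n) * (s * δ ^ m) := by rw [← hxeq, ← hyeq]
      _ = (r * s) * (δ ^ n * δ ^ m) := by ring
    -- bound k
    have hklow : n + m ≤ k := by
      have h1 : δ ^ (n + m) ≤ x * y := by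
        rw [hrs]
        have hrs1 : (1:F) ≤ r * s := by nlinarith [hrI.1, hsI.1]
        nlinarith [zpow_pos hδ0 (n + m)]
      have h2 : δ ^ (n + m) < δ ^ (k + 1) := lt_of_le_of_lt h1 (hN2 _ hxy)
      have h3 := (zpow_lt_zpow_iff_right₀ hδ1).mp h2
      omega
    have hkhigh : k ≤ n + m + 1 := by
      have h1 : x * y < δ ^ (n + m + 2) := by
        rw [hrs]
        have hrsδ : r * s < δ * δ := by
          have hr0 : (0:F) < r := lt_of_lt_of_le one_pos hrI.1
          have hs0 : (0:F) < s := lt_of_lt_of_le one_pos hsI.1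
          calc r * s < δ * s := mul_lt_mul_of_pos_right hrI.2 hs0
          _ < δ * δ := mul_lt_mul_of_pos_left hsI.2 hδ0
        calc (r * s) * δ ^ (n + m) < (δ * δ) * δ ^ (n + m) :=
              mul_lt_mul_of_pos_right hrsδ (zpow_pos hδ0 _)
        _ = δ ^ (n + m + 2) := by
              rw [show n + m + 2 = (n + m) + 1 + 1 by ring, zpow_add_one₀ (ne_of_gt hδ0),
                zpow_add_one₀ (ne_of_gt hδ0)]
              ring
      have h2 : δ ^ k < δ ^ (n + m + 2) := lt_of_le_of_lt (hN1 _ hxy) h1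
      have h3 := (zpow_lt_zpow_iff_right₀ hδ1).mp h2
      omega
    have hfrs : f (r * s) = f r + f s := hf r s (hsub hrI) (hsub hsI)
    have lx : l x = f r + n • f δ := hlval x hx
    have ly : l y = f s + m • f δ := hlval y hy
    have lxy : l (x * y) = f t + k • f δ := hlval _ hxy
    rcases eq_or_lt_of_le hkhigh with hcase | hcase
    · -- k = n + m + 1 : t * δ = r * s
      have htδ : t * δ = r * s := by
        have h1 : t * δ ^ k = (r * s) * δ ^ (n + m) := by rw [← hxyeq]; exact hrs
        rw [hcase, show n + m + 1 = (n + m) + 1 by ring,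
          zpow_add_one₀ (ne_of_gt hδ0)] at h1
        have h2 : (t * δ) * δ ^ (n + m) = (r * s) * δ ^ (n + m) := by
          rw [← h1]; ring
        exact mul_right_cancel₀ (ne_of_gt (zpow_pos hδ0 _)) h2
      have hft : f t + f δ = f r + f s := by
        rw [← hfrs, ← htδ]
        exact (hf t δ (hsub htI) hδmem).symm
      have hft' : f t = f r + f s - f δ := by rw [← hft]; abel
      rw [lxy, lx, ly, hcase, hft', add_zsmul, add_zsmul, one_zsmul]
      abel
    · -- k = n + m : t = r * s
      have hkeq : k = n + m := by omega
      have hteq : t = r * s := by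
        have h1 : t * δ ^ k = (r * s) * δ ^ k := by
          rw [← hxyeq, hkeq]; exact hrs
        exact mul_right_cancel₀ (ne_of_gt (zpow_pos hδ0 _)) h1
      rw [lxy, lx, ly, hteq, hfrs, hkeq, add_zsmul]
      abel
  have hl1 : l 1 = 0 := log_one_aux hl
  have hlinv : ∀ x : F, 0 < x → l x⁻¹ = - l x := by
    intro x hx
    have h := hl x x⁻¹ hx (inv_pos.mpr hx)
    rw [mul_inv_cancel₀ (ne_of_gt hx), hl1] at h
    exact (neg_eq_of_add_eq_zero_right h.symm).symm
  -- agreement on [1, ε)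
  have hmatch1 : ∀ x : F, 1 ≤ x → x < ε → l x = f x := by
    intro x hx1 hx2
    have hx0 : (0:F) < x := lt_of_lt_of_le one_pos hx1
    have hn0 : 0 ≤ N x := by
      by_contra hcon
      push_neg at hcon
      have h0 : N x + 1 ≤ 0 := by omega
      have h1 : δ ^ (N x + 1) ≤ δ ^ (0:ℤ) := (zpow_le_zpow_iff_right₀ hδ1).mpr h0
      rw [zpow_zero] at h1
      exact absurd (lt_of_le_of_lt hx1 (lt_of_lt_of_le (hN2 x hx0) h1)) (lt_irrefl _)
    set m : ℕ := (N x).toNat with hm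
    have hmz : (m : ℤ) = N x := Int.toNat_of_nonneg hn0
    have hpow : δ ^ (N x) = δ ^ m := by rw [← hmz, zpow_natCast]
    have hb1 : δ ^ m ≤ x := by rw [← hpow]; exact hN1 x hx0
    have hpull := log_pow_pull_aux hε hf hδ1 hδε m x hb1 hx2
    rw [hlval x hx0, hpow, ← hmz, natCast_zsmul, ← hpull]
  -- agreement on (ε⁻¹, ε)
  have hmatch2 : ∀ x ∈ Set.Ioo ε⁻¹ ε, l x = f x := by
    intro x hx
    rcases le_or_gt 1 x with h | h
    · exact hmatch1 x h hx.2
    · have hx0 : (0:F) < x := lt_trans (inv_pos.mpr hε0) hx.1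
      have hinv1 : 1 < x⁻¹ := (one_lt_inv₀ hx0).mpr h
      have hinvε : x⁻¹ < ε := by
        rw [inv_lt_comm₀ hx0 hε0]
        exact hx.1
      have hfx : f x = - f x⁻¹ := by
        have h2 := hf x x⁻¹ hx ⟨lt_trans hεinv hinv1, hinvε⟩
        rw [mul_inv_cancel₀ (ne_of_gt hx0), hf1] at h2
        exact eq_neg_of_add_eq_zero_left h2.symm
      rw [show l x = - l x⁻¹ from by rw [hlinv x hx0, neg_neg],
        hmatch1 x⁻¹ (le_of_lt hinv1) hinvε, hfx]
  -- decomposition of (ε⁻², ε²) into products from (ε⁻¹, ε)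
  have decomp : ∀ x ∈ Set.Ioo ((ε ^ 2)⁻¹) (ε ^ 2),
      ∃ a b : F, a ∈ Set.Ioo ε⁻¹ ε ∧ b ∈ Set.Ioo ε⁻¹ ε ∧ x = a * b := by
    intro x hx
    have hx0 : (0:F) < x := lt_trans (inv_pos.mpr hε20) hx.1
    set A := max ε⁻¹ (x / ε) with hA
    set B := min ε (x * ε) with hB
    have h1 : ε⁻¹ < ε := lt_trans hεinv hε
    have h2 : ε⁻¹ < x * ε := by
      have e1 : ε⁻¹ = (ε ^ 2)⁻¹ * ε := by
        rw [sq, mul_inv, mul_assoc, inv_mul_cancel₀ (ne_of_gt hε0), mul_one]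
      rw [e1]
      exact mul_lt_mul_of_pos_right hx.1 hε0
    have h3 : x / ε < ε := by
      rw [div_lt_iff₀ hε0, ← sq]
      exact hx.2
    have h4 : x / ε < x * ε := by
      have ha : x / ε < x := div_lt_self hx0 hε
      have hb : x < x * ε := lt_mul_of_one_lt_right hx0 hε
      exact lt_trans ha hb
    have hAB : A < B := max_lt (lt_min h1 h2) (lt_min h3 h4)
    set a := (A + B) / 2 with ha
    have hAa : A < a := by rw [ha]; linarith
    have haB : a < B := by rw [ha]; linarith
    have haI : a ∈ Set.Ioo ε⁻¹ ε :=
      ⟨lt_of_le_of_lt (le_max_left _ _) hAa, lt_of_lt_of_le haB (min_le_left _ _)⟩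
    have ha0 : (0:F) < a := lt_trans (inv_pos.mpr hε0) haI.1
    have hxεa : x / ε < a := lt_of_le_of_lt (le_max_right _ _) hAa
    have haxε : a < x * ε := lt_of_lt_of_le haB (min_le_right _ _)
    refine ⟨a, x / a, haI, ⟨?_, ?_⟩, (mul_div_cancel₀ x (ne_of_gt ha0)).symm⟩
    · rw [lt_div_iff₀ ha0]
      calc ε⁻¹ * a < ε⁻¹ * (x * ε) := mul_lt_mul_of_pos_left haxε (inv_pos.mpr hε0)
      _ = x := by rw [mul_comm x ε, ← mul_assoc, inv_mul_cancel₀ (ne_of_gt hε0), one_mul]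
    · rw [div_lt_iff₀ ha0]
      rw [div_lt_iff₀ hε0] at hxεa
      linarith [hxεa]
  -- agreement on (ε⁻², ε²)
  have hmatch3 : ∀ x ∈ Set.Ioo ((ε ^ 2)⁻¹) (ε ^ 2), l x = f x := by
    intro x hx
    obtain ⟨a, b, haI, hbI, hxe⟩ := decomp x hx
    have ha0 : (0:F) < a := lt_trans (inv_pos.mpr hε0) haI.1
    have hb0 : (0:F) < b := lt_trans (inv_pos.mpr hε0) hbI.1
    rw [hxe, hl a b ha0 hb0, hf a b haI hbI, hmatch2 a haI, hmatch2 b hbI]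
  refine ⟨⟨l, hl, hmatch3⟩, ?_⟩
  -- uniqueness
  rintro l₁ l₂ ⟨h₁log, h₁f⟩ ⟨h₂log, h₂f⟩ x hx
  have agree : ∀ z ∈ Set.Ioo ((ε ^ 2)⁻¹) (ε ^ 2), l₁ z = l₂ z := by
    intro z hz; rw [h₁f z hz, h₂f z hz]
  have hsub2 : Set.Ico (1:F) δ ⊆ Set.Ioo ((ε ^ 2)⁻¹) (ε ^ 2) := by
    intro r hr
    have hεε2 : ε < ε ^ 2 := by nlinarith
    exact ⟨lt_of_lt_of_le (inv_lt_one_of_one_lt₀ hε2) hr.1,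
      lt_trans (lt_trans hr.2 hδε) hεε2⟩
  have hδbig : δ ∈ Set.Ioo ((ε ^ 2)⁻¹) (ε ^ 2) := by
    have hεε2 : ε < ε ^ 2 := by nlinarith
    exact ⟨lt_trans (inv_lt_one_of_one_lt₀ hε2) hδ1, lt_trans hδε hεε2⟩
  have hrI := hratio x hx
  have hr0 : (0:F) < x / δ ^ N x := lt_of_lt_of_le one_pos hrI.1
  have hxeq : x = δ ^ N x * (x / δ ^ N x) :=
    (mul_div_cancel₀ x (ne_of_gt (zpow_pos hδ0 _))).symm
  rw [hxeq, h₁log _ _ (zpow_pos hδ0 _) hr0, h₂log _ _ (zpow_pos hδ0 _) hr0,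
    log_zpow_aux h₁log hδ0, log_zpow_aux h₂log hδ0, agree δ hδbig, agree _ (hsub2 hrI)]
end

section
/- Let G be a densely ordered Archimedean linearly ordered abelian group, let Y be an abelian group (written additively), and let a : G → Y be an additive function. If there exist α, β ∈ G with α < β and a constant c ∈ Y such that a(x) = c for all x in the open interval (α, β), then a(x) = 0 for all x ∈ G. -/
/-- An additive function on a densely ordered Archimedean linearly ordered abelian
group which is constant on a nonempty open interval is identically zero. -/
theorem additive_constant_on_interval_eq_zero
    {G : Type*} [AddCommGroup G] [LinearOrder G] [IsOrderedAddMonoid G] [Archimedean G] [DenselyOrdered G]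
    {Y : Type*} [AddCommGroup Y]
    (a : G → Y) (ha : ∀ x y : G, a (x + y) = a x + a y)
    (α β : G) (hαβ : α < β) (c : Y) (hc : ∀ x ∈ Set.Ioo α β, a x = c) :
    ∀ x : G, a x = 0 := by
  have a0 : a 0 = 0 := by
    have h := ha 0 0
    simp only [add_zero] at h
    exact left_eq_add.mp h
  -- a vanishes on (0, β - α)
  have key : ∀ d : G, 0 < d → d < β - α → a d = 0 := by
    intro d hd hdlt
    have h1 : α < β - d := lt_sub_comm.mp hdlt
    obtain ⟨t, ht1, ht2⟩ := exists_between h1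
    have htI : t ∈ Set.Ioo α β := ⟨ht1, lt_of_lt_of_le ht2 (sub_le_self _ hd.le)⟩
    have htdI : t + d ∈ Set.Ioo α β :=
      ⟨lt_add_of_lt_of_pos ht1 hd, lt_sub_iff_add_lt.mp ht2⟩
    have h := ha t d
    rw [hc _ htdI, hc _ htI] at h
    exact left_eq_add.mp h
  obtain ⟨u, hu0, hult⟩ := exists_between (sub_pos.mpr hαβ)
  have au : a u = 0 := key u hu0 hult
  -- positive case by induction
  have pos : ∀ n : ℕ, ∀ x : G, 0 < x → x < n • u → a x = 0 := by
    intro n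
    induction n with
    | zero => intro x hx hlt; simp at hlt; exact absurd hlt (not_lt.mpr hx.le)
    | succ n ih =>
      intro x hx hlt
      by_cases h : x < β - α
      · exact key x hx h
      · push_neg at h
        have hxu : 0 < x - u := sub_pos.mpr (lt_of_lt_of_le hult h)
        have hlt' : x < n • u + u := by rwa [succ_nsmul] at hlt
        have hxu2 : x - u < n • u := sub_lt_iff_lt_add.mpr hlt'
        have h2 := ha (x - u) u
        rw [sub_add_cancel, ih (x - u) hxu hxu2, au] at h2
        simpa using h2
  intro x
  rcases lt_trichotomy x 0 with hx | hx | hx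
  · have hnx : 0 < -x := neg_pos.mpr hx
    obtain ⟨n, hn⟩ := Archimedean.arch (-x) hu0
    have hax : a (-x) = 0 := pos (n + 1) (-x) hnx (lt_of_le_of_lt hn (by
      rw [succ_nsmul]; exact lt_add_of_pos_right _ hu0))
    have h2 := ha x (-x)
    rw [add_neg_cancel, a0, hax, add_zero] at h2
    exact h2.symm
  · rw [hx, a0]
  · obtain ⟨n, hn⟩ := Archimedean.arch x hu0
    exact pos (n + 1) x hx (lt_of_le_of_lt hn (by
      rw [succ_nsmul]; exact lt_add_of_pos_right _ hu0))
end

section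
/- Let G be a densely ordered Archimedean linearly ordered abelian group, let Y be an abelian group (written additively), and let a₁, a₂ : G → Y be additive functions. If there exist α, β ∈ G with α < β and a constant c ∈ Y such that a₁(x) = a₂(x) + c for all x in the open interval (α, β), then a₁(x) = a₂(x) for all x ∈ G. -/
/-- Two additive functions on a densely ordered Archimedean linearly ordered abelian
group that differ by a constant on a nonempty open interval are equal everywhere. -/
theorem additive_eq_of_eq_add_const_on_interval
    {G : Type*} [AddCommGroup G] [LinearOrder G] [IsOrderedAddMonoid G] [Archimedean G] [DenselyOrdered G]
    {Y : Type*} [AddCommGroup Y]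
    (a₁ a₂ : G → Y)
    (ha₁ : ∀ x y : G, a₁ (x + y) = a₁ x + a₁ y)
    (ha₂ : ∀ x y : G, a₂ (x + y) = a₂ x + a₂ y)
    (α β : G) (hαβ : α < β) (c : Y) (hc : ∀ x ∈ Set.Ioo α β, a₁ x = a₂ x + c) :
    ∀ x : G, a₁ x = a₂ x := by
  set f : G → Y := fun x => a₁ x - a₂ x with hfdef
  have hf : ∀ x y : G, f (x + y) = f x + f y := by
    intro x y
    simp only [hfdef, ha₁ x y, ha₂ x y]
    abel
  have hfc : ∀ x ∈ Set.Ioo α β, f x = c := by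
    intro x hx
    simp only [hfdef, hc x hx]
    abel
  have hε : (0 : G) < β - α := sub_pos.mpr hαβ
  have hf0 : f 0 = 0 := by
    have h0 := hf 0 0
    rw [add_zero] at h0
    exact (left_eq_add.mp h0)
  have hfneg : ∀ x : G, f (-x) = -f x := by
    intro x
    have h := hf x (-x)
    rw [add_neg_cancel, hf0] at h
    exact (neg_eq_of_add_eq_zero_right h.symm).symm
  -- f vanishes on (0, β - α)
  have fd : ∀ d : G, 0 < d → d < β - α → f d = 0 := by
    intro d hd0 hdε
    have h1 : α < β - d := lt_sub_comm.mp hdε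
    obtain ⟨u, hu1, hu2⟩ := exists_between h1
    have hu3 : u < β := hu2.trans (sub_lt_self β hd0)
    have hud : u + d ∈ Set.Ioo α β := by
      constructor
      · exact lt_of_lt_of_le hu1 (le_add_of_nonneg_right hd0.le)
      · exact add_lt_of_lt_sub_right hu2
    have h2 := hf u d
    rw [hfc u ⟨hu1, hu3⟩, hfc (u + d) hud] at h2
    exact (left_eq_add.mp h2)
  have key : ∀ n : ℕ, ∀ x : G, 0 < x → x < n • (β - α) → f x = 0 := by
    intro n
    induction n with
    | zero =>
      intro x hx hxn
      simp only [zero_smul] at hxn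
      exact absurd hxn (not_lt.mpr hx.le)
    | succ n ih =>
      intro x hx hxn
      by_cases hxε : x < β - α
      · exact fd x hx hxε
      · push_neg at hxε
        have hsub : x - n • (β - α) < β - α := by
          rw [succ_nsmul, add_comm] at hxn
          exact sub_lt_iff_lt_add.mpr hxn
        have hlo : max (x - n • (β - α)) 0 < β - α := max_lt hsub hε
        obtain ⟨y, hy1, hy2⟩ := exists_between hlo
        have hy0 : 0 < y := lt_of_le_of_lt (le_max_right _ _) hy1
        have hxy0 : 0 < x - y := sub_pos.mpr (hy2.trans_le hxε)
        have hxyn : x - y < n • (β - α) := by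
          rw [sub_lt_comm]
          exact lt_of_le_of_lt (le_max_left _ _) hy1
        have h := hf (x - y) y
        rw [sub_add_cancel] at h
        rw [h, ih (x - y) hxy0 hxyn, fd y hy0 hy2, add_zero]
  have fzero : ∀ x : G, f x = 0 := by
    have pos : ∀ x : G, 0 < x → f x = 0 := by
      intro x hx
      obtain ⟨n, hn⟩ := Archimedean.arch x hε
      have : x < (n + 1) • (β - α) := by
        rw [succ_nsmul]
        exact hn.trans_lt (lt_add_of_pos_right _ hε)
      exact key (n + 1) x hx this
    intro x
    rcases lt_trichotomy x 0 with h | h | h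
    · have := pos (-x) (neg_pos.mpr h)
      rw [hfneg] at this
      exact neg_eq_zero.mp this
    · rw [h, hf0]
    · exact pos x h
  intro x
  have := fzero x
  simpa [hfdef, sub_eq_zero] using this
end

section
/- Let F be an Archimedean linearly ordered field, let Y be an abelian group (written additively), and let l : F → Y satisfy l(x·y) = l(x) + l(y) for all x, y > 0. If there exist α, β ∈ F with 0 < α < β and a constant c ∈ Y such that l(x) = c for all x in the open interval (α, β), then l(x) = 0 for all x > 0. -/
/-- A logarithmic function on the positive elements of an Archimedean linearly
ordered field which is constant on a nonempty open interval of positives is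
identically zero on the positives. -/
theorem logarithmic_constant_on_interval_eq_zero
    {F : Type*} [Field F] [LinearOrder F] [IsStrictOrderedRing F] [Archimedean F]
    {Y : Type*} [AddCommGroup Y]
    (l : F → Y) (hl : ∀ x y : F, 0 < x → 0 < y → l (x * y) = l x + l y)
    (α β : F) (hα : 0 < α) (hαβ : α < β) (c : Y)
    (hc : ∀ x ∈ Set.Ioo α β, l x = c) :
    ∀ x : F, 0 < x → l x = 0 := by
  have hβ : 0 < β := hα.trans hαβ
  -- Step 1: l vanishes on the multiplicative interval (1, β/α)
  have key : ∀ t : F, 1 < t → t * α < β → l t = 0 := by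
    intro t ht1 htβ
    have ht0 : 0 < t := zero_lt_one.trans ht1
    set y : F := (α + β / t) / 2 with hy
    have hαlt : α < β / t := by
      rw [lt_div_iff₀ ht0]; linarith
    have hy1 : α < y := by rw [hy]; linarith
    have hy2 : y < β / t := by rw [hy]; linarith
    have hy0 : 0 < y := hα.trans hy1
    have hyt : y * t < β := (lt_div_iff₀ ht0).mp hy2
    have hyβ : y < β := lt_of_lt_of_le (lt_mul_of_one_lt_right hy0 ht1) hyt.le
    have hαyt : α < y * t := hy1.trans (lt_mul_of_one_lt_right hy0 ht1)
    have h1 : l (y * t) = c := hc _ ⟨hαyt, hyt⟩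
    have h2 : l y = c := hc _ ⟨hy1, hyβ⟩
    have h := hl y t hy0 ht0
    rw [h1, h2] at h
    exact (left_eq_add.mp h)
  -- l 1 = 0
  have l1 : l (1 : F) = 0 := by
    have h := hl 1 1 one_pos one_pos
    rw [one_mul] at h
    exact left_eq_add.mp h
  -- powers
  have lpow : ∀ (n : ℕ) (x : F), 0 < x → l (x ^ n) = n • l x := by
    intro n x hx
    induction n with
    | zero => simpa using l1
    | succ k ih =>
      rw [pow_succ, hl _ _ (pow_pos hx k) hx, ih, succ_nsmul]
  -- the base s
  set s : F := (1 + β / α) / 2 with hsdef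
  have hβα : 1 < β / α := (one_lt_div hα).mpr hαβ
  have hs1 : 1 < s := by rw [hsdef]; linarith
  have hs0 : 0 < s := zero_lt_one.trans hs1
  have hsβ : s * α < β := by
    have : s < β / α := by rw [hsdef]; linarith
    calc s * α < (β / α) * α := by exact mul_lt_mul_of_pos_right this hα
    _ = β := div_mul_cancel₀ β hα.ne'
  have ls : l s = 0 := key s hs1 hsβ
  -- main claim for x ≥ 1
  have main : ∀ x : F, 1 ≤ x → l x = 0 := by
    intro x hx
    have hx0 : 0 < x := zero_lt_one.trans_le hx
    have hex : ∃ n : ℕ, x < s ^ n := pow_unbounded_of_one_lt x hs1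
    set n := Nat.find hex with hn
    have hnx : x < s ^ n := Nat.find_spec hex
    have hn0 : n ≠ 0 := by
      intro h
      rw [h, pow_zero] at hnx
      exact absurd hnx (not_lt.mpr hx)
    obtain ⟨m, hm⟩ : ∃ m, n = m + 1 := ⟨n - 1, (Nat.succ_pred_eq_of_pos (Nat.pos_of_ne_zero hn0)).symm⟩
    have hml : s ^ m ≤ x := by
      have := Nat.find_min hex (by omega : m < n)
      exact not_lt.mp this
    have hsm : (0 : F) < s ^ m := pow_pos hs0 m
    set t : F := x / s ^ m with ht
    have ht1 : 1 ≤ t := (one_le_div hsm).mpr hml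
    have hts : t < s := by
      rw [ht, div_lt_iff₀ hsm]
      rw [hm, pow_succ] at hnx
      linarith [hnx, mul_comm s (s^m)]
    have hxeq : x = s ^ m * t := by
      rw [ht, mul_div_cancel₀ _ hsm.ne']
    have lt0 : l t = 0 := by
      rcases eq_or_lt_of_le ht1 with h | h
      · rw [← h]; exact l1
      · exact key t h (lt_trans (mul_lt_mul_of_pos_right hts hα) hsβ)
    have ht0 : 0 < t := zero_lt_one.trans_le ht1
    rw [hxeq, hl _ _ hsm ht0, lpow m s hs0, ls, lt0, smul_zero, add_zero]
  -- finish
  intro x hx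
  rcases le_or_gt 1 x with h | h
  · exact main x h
  · have hx1 : 1 ≤ x⁻¹ := (one_le_inv_iff₀).mpr ⟨hx, h.le⟩
    have hinv : l x + l x⁻¹ = 0 := by
      rw [← hl x x⁻¹ hx (inv_pos.mpr hx), mul_inv_cancel₀ hx.ne', l1]
    rw [main x⁻¹ hx1, add_zero] at hinv
    exact hinv
end

section
/- Let F be an Archimedean linearly ordered field, let Y be an abelian group (written additively), and let l₁, l₂ : F → Y satisfy lᵢ(x·y) = lᵢ(x) + lᵢ(y) for all x, y > 0 (i = 1, 2). If there exist α, β ∈ F with 0 < α < β and a constant c ∈ Y such that l₁(x) = l₂(x) + c for all x in the open interval (α, β), then l₁(x) = l₂(x) for all x > 0. -/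
/-- Two logarithmic functions on the positive elements of an Archimedean linearly
ordered field that differ by a constant on a nonempty open interval of positives
agree on all positives. -/
theorem logarithmic_eq_of_eq_add_const_on_interval
    {F : Type*} [Field F] [LinearOrder F] [IsStrictOrderedRing F] [Archimedean F]
    {Y : Type*} [AddCommGroup Y]
    (l₁ l₂ : F → Y)
    (hl₁ : ∀ x y : F, 0 < x → 0 < y → l₁ (x * y) = l₁ x + l₁ y)
    (hl₂ : ∀ x y : F, 0 < x → 0 < y → l₂ (x * y) = l₂ x + l₂ y)
    (α β : F) (hα : 0 < α) (hαβ : α < β) (c : Y)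
    (hc : ∀ x ∈ Set.Ioo α β, l₁ x = l₂ x + c) :
    ∀ x : F, 0 < x → l₁ x = l₂ x := by
  set l : F → Y := fun x => l₁ x - l₂ x with hl_def
  have hl : ∀ x y : F, 0 < x → 0 < y → l (x * y) = l x + l y := by
    intro x y hx hy
    simp only [hl_def, hl₁ x y hx hy, hl₂ x y hx hy]
    abel
  have hcc : ∀ x ∈ Set.Ioo α β, l x = c := by
    intro x hx
    simp [hl_def, hc x hx]
  have hl1 : l 1 = 0 := by
    have := hl 1 1 one_pos one_pos
    simpa using this
  -- l vanishes on (1, β/α)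
  have hz : ∀ u : F, 1 < u → u < β / α → l u = 0 := by
    intro u hu1 hu2
    have hu0 : (0:F) < u := lt_trans one_pos hu1
    have hαβu : α < β / u := by
      rw [lt_div_iff₀ hu0]
      calc α * u < α * (β / α) := by
            exact mul_lt_mul_of_pos_left hu2 hα
        _ = β := by field_simp
    set y : F := (α + β / u) / 2 with hy_def
    have hy1 : α < y := by rw [hy_def]; linarith
    have hy2 : y < β / u := by rw [hy_def]; linarith
    have hyβ : y < β := lt_trans hy2 (by
      rw [div_lt_iff₀ hu0]; nlinarith [lt_trans hα hαβ])
    have hy0 : 0 < y := lt_trans hα hy1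
    have huy : u * y ∈ Set.Ioo α β := by
      constructor
      · calc α < y := hy1
          _ = 1 * y := (one_mul y).symm
          _ < u * y := by exact mul_lt_mul_of_pos_right hu1 hy0
      · calc u * y < u * (β / u) := mul_lt_mul_of_pos_left hy2 hu0
          _ = β := by field_simp
    have h1 := hl u y hu0 hy0
    rw [hcc _ huy, hcc _ ⟨hy1, hyβ⟩] at h1
    simpa using h1
  -- choose t in (1, β/α)
  set t : F := (1 + β / α) / 2 with ht_def
  have hba : (1:F) < β / α := (one_lt_div hα).mpr hαβ
  have ht1 : (1:F) < t := by rw [ht_def]; linarith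
  have ht2 : t < β / α := by rw [ht_def]; linarith
  have ht0 : (0:F) < t := lt_trans one_pos ht1
  have hlt : l t = 0 := hz t ht1 ht2
  have hpow : ∀ n : ℕ, l (t ^ n) = 0 := by
    intro n
    induction n with
    | zero => simpa using hl1
    | succ n ih =>
      rw [pow_succ, hl _ _ (pow_pos ht0 n) ht0, ih, hlt, add_zero]
  have hzpow : ∀ k : ℤ, l (t ^ k) = 0 := by
    intro k
    cases k with
    | ofNat n => simpa using hpow n
    | negSucc n =>
      have hp : (0:F) < t ^ (n+1) := pow_pos ht0 _
      have h1 : t ^ (n+1) * t ^ (Int.negSucc n) = 1 := by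
        rw [Int.negSucc_eq, zpow_neg]
        field_simp
        norm_cast
      have h2 := hl (t ^ (n+1)) (t ^ (Int.negSucc n))
        hp (zpow_pos ht0 _)
      rw [h1, hl1, hpow (n+1)] at h2
      simpa using h2.symm
  intro x hx
  obtain ⟨k, hk1, hk2⟩ := exists_mem_Ico_zpow hx ht1
  have htk : (0:F) < t ^ k := zpow_pos ht0 k
  set u : F := x / t ^ k with hu_def
  have hu0 : 0 < u := div_pos hx htk
  have hu1 : 1 ≤ u := (one_le_div htk).mpr hk1
  have hu2 : u < t := by
    rw [hu_def, div_lt_iff₀ htk, ← zpow_one_add₀ (ne_of_gt ht0)]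
    rwa [add_comm]
  have hxu : x = u * t ^ k := by rw [hu_def]; field_simp
  have hlu : l u = 0 := by
    rcases eq_or_lt_of_le hu1 with h | h
    · rw [← h]; exact hl1
    · exact hz u h (lt_trans hu2 ht2)
  have : l x = 0 := by
    rw [hxu, hl u (t ^ k) hu0 htk, hlu, hzpow k, add_zero]
  have := this
  simpa [hl_def, sub_eq_zero] using this
end
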